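/- arXiv:1607.00025 — 5 statements merged into one kernel-verified Lean document; each statement's English description precedes it below -/
import Mathlib

section
/- Let (R, 𝔪) be a Noetherian local ring of dimension d, and let a, x₂, …, x_d be a system of parameters of R. Let S = R(a^{1/2}) = R[X]/(X² - a) with maximal ideal 𝔫, and let α ∈ S be the class of X (a square root of a). Then α, x₂, …, x_d is a system of parameters for S. -/
open Polynomial

/-- A system of parameters of a local ring: `d` elements whose span has radical the
maximal ideal, where `d` is the Krull dimension. -/
def IsSystemOfParameters (R : Type*) [CommRing R] [IsLocalRing R] {d : ℕ}
    (x : Fin d → R) : Prop :=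
  ringKrullDim R = d ∧ (Ideal.span (Set.range x)).radical = IsLocalRing.maximalIdeal R

/-!
`S = R[X]/(X² - a)` is a free `R`-module with basis `1, α`, so it is integral over `R` and
contains `R`; by incomparability and going up, `dim S = dim R`. A maximal ideal of `S` lies
over `𝔪` and contains `α`, since `α² = a ∈ 𝔪`; writing any element as `r + sα` shows that it
is exactly `𝔪S + αS`, so `S` is local with this maximal ideal. The ideal `(α, x₂, …, x_d)`
contains `α² = a`, hence the extension of `(a, x₂, …, x_d)`, so its radical contains `𝔪S`
and `α`.
-/

open IsLocalRing

section IntegralExtension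

variable {R S : Type*} [CommRing R] [CommRing S] [Algebra R S] [Algebra.IsIntegral R S]

theorem ringKrullDim_le_of_isIntegral : ringKrullDim S ≤ ringKrullDim R :=
  Order.krullDim_le_of_strictMono (PrimeSpectrum.comap (algebraMap R S))
    fun _ _ h ↦ Ideal.IsIntegral.comap_lt_comap (R := R) h

theorem ringKrullDim_le_of_isIntegral_of_faithfulSMul [FaithfulSMul R S] :
    ringKrullDim R ≤ ringKrullDim S := by
  refine iSup_le fun l ↦ ?_
  obtain ⟨⟨P, hP, hPl⟩⟩ := Ideal.nonempty_primesOver (S := S) l.head.asIdeal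
  obtain ⟨L, hlen, -⟩ := Ideal.exists_ltSeries_of_hasGoingUp l P
  exact hlen ▸ Order.LTSeries.length_le_krullDim L

theorem ringKrullDim_eq_of_isIntegral [FaithfulSMul R S] : ringKrullDim S = ringKrullDim R :=
  ringKrullDim_le_of_isIntegral.antisymm ringKrullDim_le_of_isIntegral_of_faithfulSMul

theorem comap_eq_maximalIdeal_of_isIntegral [IsLocalRing R] (Q : Ideal S) [Q.IsMaximal] :
    Q.comap (algebraMap R S) = maximalIdeal R :=
  eq_maximalIdeal (Ideal.isMaximal_comap_of_isIntegral_of_isMaximal Q)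

end IntegralExtension

theorem IsLocalRing.mem_maximalIdeal_of_radical_span_eq {R ι : Type*} [CommRing R]
    [IsLocalRing R] {y : ι → R} (hy : (Ideal.span (Set.range y)).radical = maximalIdeal R)
    (i : ι) : y i ∈ maximalIdeal R :=
  hy ▸ Ideal.le_radical (Ideal.subset_span ⟨i, rfl⟩)

abbrev AdjoinSqrt {R : Type*} [CommRing R] (a : R) : Type _ :=
  R[X] ⧸ Ideal.span {(X : R[X]) ^ 2 - C a}

namespace AdjoinSqrt

variable {R : Type*} [CommRing R] (a : R)

noncomputable def sqrt : AdjoinSqrt a := Ideal.Quotient.mk _ X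

theorem mk_C (r : R) :
    Ideal.Quotient.mk (Ideal.span {(X : R[X]) ^ 2 - C a}) (C r) = algebraMap R _ r :=
  rfl

theorem monic_X_sq_sub_C : ((X : R[X]) ^ 2 - C a).Monic := monic_X_pow_sub_C a two_ne_zero

instance : Module.Finite R (AdjoinSqrt a) := (monic_X_sq_sub_C a).finite_quotient

theorem sqrt_sq : sqrt a ^ 2 = algebraMap R (AdjoinSqrt a) a := by
  rw [sqrt, ← map_pow, ← sub_eq_zero, ← mk_C, ← map_sub]
  exact Ideal.Quotient.eq_zero_iff_mem.mpr (Ideal.subset_span rfl)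

section Nontrivial

variable [Nontrivial R]

theorem degree_X_sq_sub_C : ((X : R[X]) ^ 2 - C a).degree = 2 := degree_X_pow_sub_C two_pos a

instance : FaithfulSMul R (AdjoinSqrt a) := by
  refine (faithfulSMul_iff_algebraMap_injective R _).mpr <|
    (injective_iff_map_eq_zero (algebraMap R (AdjoinSqrt a))).mpr fun r hr ↦ ?_
  by_contra h
  refine AdjoinRoot.mk_ne_zero_of_degree_lt (monic_X_sq_sub_C a) (C_ne_zero.mpr h) ?_ hr
  rw [degree_X_sq_sub_C]
  exact degree_C_le.trans_lt (by norm_num)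

theorem exists_eq_algebraMap_add_mul_sqrt (z : AdjoinSqrt a) :
    ∃ r s : R, z = algebraMap R _ r + algebraMap R _ s * sqrt a := by
  obtain ⟨p, rfl⟩ := Ideal.Quotient.mk_surjective z
  set q := p %ₘ (X ^ 2 - C a)
  have hq : q.degree ≤ 1 := by
    have := degree_modByMonic_lt p (monic_X_sq_sub_C a)
    rw [degree_X_sq_sub_C] at this
    exact Order.le_of_lt_succ this
  refine ⟨q.coeff 0, q.coeff 1, ?_⟩
  have : Ideal.Quotient.mk (Ideal.span {(X : R[X]) ^ 2 - C a}) p = Ideal.Quotient.mk _ q :=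
    (AdjoinRoot.mk_leftInverse (monic_X_sq_sub_C a) _).symm
  conv_lhs => rw [this, eq_X_add_C_of_degree_le_one hq, map_add, map_mul, mk_C, mk_C]
  rw [sqrt, add_comm, mul_comm]

end Nontrivial

variable [IsLocalRing R] {a}

theorem sqrt_mem_of_isMaximal (ha : a ∈ maximalIdeal R) (Q : Ideal (AdjoinSqrt a)) [Q.IsMaximal] :
    sqrt a ∈ Q := by
  rw [← comap_eq_maximalIdeal_of_isIntegral (R := R) Q, Ideal.mem_comap, ← sqrt_sq] at ha
  exact Ideal.IsPrime.mem_of_pow_mem inferInstance 2 ha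

theorem eq_of_isMaximal (ha : a ∈ maximalIdeal R) (Q : Ideal (AdjoinSqrt a)) [Q.IsMaximal] :
    Q = (maximalIdeal R).map (algebraMap R _) ⊔ Ideal.span {sqrt a} := by
  have hQ := comap_eq_maximalIdeal_of_isIntegral (R := R) Q
  refine le_antisymm (fun z hz ↦ ?_) <| sup_le (Ideal.map_le_iff_le_comap.mpr hQ.ge)
    (Ideal.span_singleton_le_iff_mem _ |>.mpr (sqrt_mem_of_isMaximal ha Q))
  obtain ⟨r, s, rfl⟩ := exists_eq_algebraMap_add_mul_sqrt a z
  have hr : r ∈ maximalIdeal R := by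
    rw [← hQ, Ideal.mem_comap]
    simpa using Q.sub_mem hz (Q.mul_mem_left (algebraMap R _ s) (sqrt_mem_of_isMaximal ha Q))
  exact Ideal.add_mem _ (Ideal.mem_sup_left (Ideal.mem_map_of_mem _ hr))
    (Ideal.mem_sup_right (Ideal.mul_mem_left _ _ (Ideal.mem_span_singleton_self _)))

theorem isLocalRing (ha : a ∈ maximalIdeal R) : IsLocalRing (AdjoinSqrt a) := by
  have := (FaithfulSMul.algebraMap_injective R (AdjoinSqrt a)).nontrivial
  obtain ⟨M, hM⟩ := Ideal.exists_maximal (AdjoinSqrt a)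
  exact .of_unique_max_ideal
    ⟨M, hM, fun Q _ ↦ (eq_of_isMaximal ha Q).trans (eq_of_isMaximal ha M).symm⟩

theorem maximalIdeal_eq (ha : a ∈ maximalIdeal R) [IsLocalRing (AdjoinSqrt a)] :
    maximalIdeal (AdjoinSqrt a) = (maximalIdeal R).map (algebraMap R _) ⊔ Ideal.span {sqrt a} :=
  eq_of_isMaximal ha _

theorem radical_span_eq_maximalIdeal {ι : Type*} [DecidableEq ι] {y : ι → R} (i₀ : ι)
    (hy : (Ideal.span (Set.range y)).radical = maximalIdeal R)
    [IsLocalRing (AdjoinSqrt (y i₀))] :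
    (Ideal.span (Set.range fun i ↦
      if i = i₀ then sqrt (y i₀) else algebraMap R (AdjoinSqrt (y i₀)) (y i))).radical =
      maximalIdeal (AdjoinSqrt (y i₀)) := by
  set J := Ideal.span (Set.range fun i ↦
    if i = i₀ then sqrt (y i₀) else algebraMap R (AdjoinSqrt (y i₀)) (y i))
  have hy_mem := mem_maximalIdeal_of_radical_span_eq hy
  have hsqrt : sqrt (y i₀) ∈ J := Ideal.subset_span ⟨i₀, if_pos rfl⟩
  have hyJ (i : ι) : algebraMap R _ (y i) ∈ J := by
    by_cases hi : i = i₀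
    · subst hi
      have h := J.mul_mem_left (sqrt (y i)) hsqrt
      rwa [← pow_two, sqrt_sq] at h
    · exact Ideal.subset_span ⟨i, if_neg hi⟩
  have hJ : J ≤ maximalIdeal (AdjoinSqrt (y i₀)) := by
    refine Ideal.span_le.mpr ?_
    rintro _ ⟨i, rfl⟩
    rw [maximalIdeal_eq (hy_mem i₀)]
    dsimp only
    split_ifs
    · exact Ideal.mem_sup_right (Ideal.mem_span_singleton_self _)
    · exact Ideal.mem_sup_left (Ideal.mem_map_of_mem _ (hy_mem i))
  have hmap : (maximalIdeal R).map (algebraMap R (AdjoinSqrt (y i₀))) ≤ J.radical := by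
    rw [← hy]
    refine (Ideal.map_radical_le _).trans (Ideal.radical_mono ?_)
    rw [Ideal.map_span, ← Set.range_comp]
    exact Ideal.span_le.mpr (Set.range_subset_iff.mpr hyJ)
  refine le_antisymm ((IsLocalRing.maximalIdeal.isMaximal _).isPrime.radical_le_iff.mpr hJ) ?_
  rw [maximalIdeal_eq (hy_mem i₀)]
  exact sup_le hmap ((Ideal.span_singleton_le_iff_mem _).mpr (Ideal.le_radical hsqrt))

theorem isSystemOfParameters {d : ℕ} {y : Fin d → R} (i₀ : Fin d)
    (hy : IsSystemOfParameters R y) [IsLocalRing (AdjoinSqrt (y i₀))] :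
    IsSystemOfParameters (AdjoinSqrt (y i₀))
      (fun i ↦ if i = i₀ then sqrt (y i₀) else algebraMap R _ (y i)) :=
  ⟨ringKrullDim_eq_of_isIntegral.trans hy.1, radical_span_eq_maximalIdeal i₀ hy.2⟩

end AdjoinSqrt

theorem stmt_3_general (R : Type*) [CommRing R] [IsLocalRing R]
    (d : ℕ) (hd : 0 < d) (y : Fin d → R) (hy : IsSystemOfParameters R y) :
    ∃ _ : IsLocalRing (R[X] ⧸ Ideal.span {(X : R[X]) ^ 2 - C (y ⟨0, hd⟩)}),
      IsSystemOfParameters (R[X] ⧸ Ideal.span {(X : R[X]) ^ 2 - C (y ⟨0, hd⟩)})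
        (fun i : Fin d =>
          if i = ⟨0, hd⟩ then Ideal.Quotient.mk _ (X : R[X])
          else Ideal.Quotient.mk _ (C (y i))) := by
  have hS := AdjoinSqrt.isLocalRing (mem_maximalIdeal_of_radical_span_eq hy.2 ⟨0, hd⟩)
  exact ⟨hS, AdjoinSqrt.isSystemOfParameters ⟨0, hd⟩ hy⟩

/-- Let `(R, 𝔪)` be Noetherian local of dimension `d` and let
`a = y 0, y 1, …, y (d-1)` be a system of parameters of `R`.  In `S = R[X]/(X² - a)`,
the class `α` of `X` (a square root of `a`) together with `y 1, …, y (d-1)` is a system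
of parameters of `S`. -/
theorem stmt_3 (R : Type*) [CommRing R] [IsNoetherianRing R] [IsLocalRing R]
    (d : ℕ) (hd : 0 < d) (y : Fin d → R) (hy : IsSystemOfParameters R y)
    (ha : y ⟨0, hd⟩ ∈ IsLocalRing.maximalIdeal R) :
    ∃ _ : IsLocalRing (R[X] ⧸ Ideal.span {(X : R[X]) ^ 2 - C (y ⟨0, hd⟩)}),
      IsSystemOfParameters (R[X] ⧸ Ideal.span {(X : R[X]) ^ 2 - C (y ⟨0, hd⟩)})
        (fun i : Fin d =>
          if i = ⟨0, hd⟩ then Ideal.Quotient.mk _ (X : R[X])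
          else Ideal.Quotient.mk _ (C (y i))) :=
  stmt_3_general R d hd y hy
end

section
/- Let R be an integral domain and a ∈ R. Then R(a^{1/2}) = R[X]/(X² - a) is an integral domain if and only if a does not have a square root in the fraction field Frac(R). -/
open Polynomial

private lemma not_dvd_linear {R : Type*} [CommRing R] [IsDomain R] {a b c : R} (hc : c ≠ 0) :
    ¬ ((X : R[X]) ^ 2 - C a ∣ C c * X + C b) := by
  intro h
  have hne : (C c * X + C b : R[X]) ≠ 0 := fun h0 => by
    have := congrArg (fun p => Polynomial.coeff p 1) h0
    simp at this
    exact hc this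
  have hd := Polynomial.natDegree_le_of_dvd h hne
  rw [natDegree_X_pow_sub_C] at hd
  have : (C c * X + C b : R[X]).natDegree ≤ 1 := natDegree_linear_le
  omega

/-- For an integral domain `R` and `a ∈ R`, `R[X]/(X² - a)` is an
integral domain iff `a` has no square root in `Frac(R)`. -/
theorem stmt_4 (R : Type*) [CommRing R] [IsDomain R] (a : R) :
    IsDomain (R[X] ⧸ Ideal.span {(X : R[X]) ^ 2 - C a}) ↔
      ¬∃ q : FractionRing R, q ^ 2 = algebraMap R (FractionRing R) a := by
  set K := FractionRing R
  have hinj : Function.Injective (algebraMap R K) := IsFractionRing.injective R K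
  have hmonic : ((X : R[X]) ^ 2 - C a).Monic := monic_X_pow_sub_C a (by norm_num)
  have hp0 : ((X : R[X]) ^ 2 - C a) ≠ 0 := hmonic.ne_zero
  rw [Ideal.Quotient.isDomain_iff_prime, Ideal.span_singleton_prime hp0]
  constructor
  · rintro hpr ⟨q, hq⟩
    obtain ⟨⟨b, c⟩, hbc⟩ := IsLocalization.surj (nonZeroDivisors R) q
    simp only at hbc
    have hc0 : (c : R) ≠ 0 := nonZeroDivisors.coe_ne_zero c
    have hkey : (b : R) ^ 2 = c ^ 2 * a := by
      apply hinj
      have := congrArg (fun x => x ^ 2) hbc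
      simp only [mul_pow, hq] at this
      push_cast [map_mul, map_pow]
      rw [← this]; ring
    have hdvd : ((X : R[X]) ^ 2 - C a) ∣ (C (c : R) * X + C (-b)) * (C (c : R) * X + C b) := by
      refine ⟨C ((c : R) ^ 2), ?_⟩
      have e : (C (c : R) * X + C (-(b : R))) * (C (c : R) * X + C (b : R))
          = C (c : R) ^ 2 * X ^ 2 - C (b : R) ^ 2 := by
        rw [C_neg]; ring
      rw [e, ← C_pow, ← C_pow, hkey, C_mul, C_pow]
      ring
    rcases hpr.2.2 _ _ hdvd with h | h
    · exact not_dvd_linear hc0 h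
    · exact not_dvd_linear hc0 h
  · intro hns
    refine ⟨hp0, ?_, ?_⟩
    · intro hu
      have := Polynomial.natDegree_eq_zero_of_isUnit hu
      rw [natDegree_X_pow_sub_C] at this
      omega
    · intro f g hfg
      set φ := algebraMap R K
      have hmap : ((X : R[X]) ^ 2 - C a).map φ = (X : K[X]) ^ 2 - C (φ a) := by
        simp [Polynomial.map_sub, Polynomial.map_pow]
      have hirr : Irreducible ((X : K[X]) ^ 2 - C (φ a)) := by
        apply X_pow_sub_C_irreducible_of_prime Nat.prime_two
        intro b hb
        exact hns ⟨b, hb⟩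
      have hprK : Prime ((X : K[X]) ^ 2 - C (φ a)) := hirr.prime
      have : ((X : R[X]) ^ 2 - C a).map φ ∣ (f * g).map φ := by
        rw [Polynomial.map_dvd_map φ hinj hmonic]; exact hfg
    
      rw [hmap, Polynomial.map_mul] at this
      rcases hprK.2.2 _ _ this with h | h
      · left
        rwa [← hmap, Polynomial.map_dvd_map φ hinj hmonic] at h
      · right
        rwa [← hmap, Polynomial.map_dvd_map φ hinj hmonic] at h
end

section
/- Let R be an integral domain, S an integral domain which is an R-algebra via φ : R → S, and a ∈ R such that φ(a) has a square root β in S. Then the induced R-algebra homomorphism Ψ : R[X]/(X²-a) → S sending X to β is injective if and only if φ is injective and a does not have a square root in Frac(R). -/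
open Polynomial

/-! Since `X² - a` is monic of degree 2, every element of `R[X]/(X² - a)` is uniquely `c + dX`,
so `Ψ` is injective iff `φ d * β + φ c = 0` forces `c = d = 0`. When `φ` is injective, such a
relation with `d ≠ 0` gives `(c/d)² = a` in `Frac R`. Conversely, `c² = a d²` with `d ≠ 0` makes
`(φ d * β + φ c) * (φ d * β - φ c) = φ (a d² - c²)` vanish, so one factor is a nontrivial relation
in the domain `S`. -/

namespace Polynomial

variable {R : Type*} [CommRing R]

lemma C_mul_X_add_C_eq_zero_iff (c d : R) : C d * X + C c = 0 ↔ d = 0 ∧ c = 0 := by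
  refine ⟨fun h => ⟨?_, ?_⟩, fun ⟨hd, hc⟩ => by simp [hd, hc]⟩
  · simpa using congrArg (coeff · 1) h
  · simpa using congrArg (coeff · 0) h

variable {f : R[X]} (hf : f.Monic) (hf2 : f.degree = 2)
include hf hf2

lemma Monic.mk_C_mul_X_add_C_eq_zero_iff (c d : R) :
    Ideal.Quotient.mk (Ideal.span {f}) (C d * X + C c) = 0 ↔ d = 0 ∧ c = 0 := by
  rw [Ideal.Quotient.eq_zero_iff_dvd, ← C_mul_X_add_C_eq_zero_iff]
  refine ⟨fun h => ?_, fun h => h ▸ dvd_zero f⟩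
  by_contra hne
  exact hf.not_dvd_of_degree_lt hne (hf2 ▸ degree_linear_le.trans_lt (by norm_num)) h

lemma Monic.exists_mk_C_mul_X_add_C_eq [Nontrivial R] (x : R[X] ⧸ Ideal.span {f}) :
    ∃ c d : R, Ideal.Quotient.mk _ (C d * X + C c) = x := by
  obtain ⟨q, rfl⟩ := Ideal.Quotient.mk_surjective x
  have hq : (q %ₘ f).degree ≤ 1 := by
    have := degree_modByMonic_lt q hf
    rw [hf2] at this
    exact Order.le_of_lt_succ this
  refine ⟨(q %ₘ f).coeff 0, (q %ₘ f).coeff 1, ?_⟩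
  rw [← eq_X_add_C_of_degree_le_one hq]
  have := AdjoinRoot.mk_leftInverse hf (AdjoinRoot.mk f q)
  rwa [AdjoinRoot.modByMonicHom_mk] at this

lemma Monic.injective_quotient_hom_iff [Nontrivial R] {S : Type*} [CommRing S] (φ : R →+* S)
    (β : S) (Ψ : R[X] ⧸ Ideal.span {f} →+* S)
    (hΨC : ∀ r : R, Ψ (Ideal.Quotient.mk _ (C r)) = φ r)
    (hΨX : Ψ (Ideal.Quotient.mk _ X) = β) :
    Function.Injective Ψ ↔ ∀ c d : R, φ d * β + φ c = 0 → d = 0 ∧ c = 0 := by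
  have hΨ : ∀ c d : R, Ψ (Ideal.Quotient.mk _ (C d * X + C c)) = φ d * β + φ c := by
    simp only [map_add, map_mul, hΨC, hΨX, implies_true]
  rw [injective_iff_map_eq_zero]
  constructor
  · intro h c d hcd
    rw [← hf.mk_C_mul_X_add_C_eq_zero_iff hf2]
    exact h _ (by rw [hΨ, hcd])
  · intro h x hx
    obtain ⟨c, d, rfl⟩ := hf.exists_mk_C_mul_X_add_C_eq hf2 x
    rw [hΨ] at hx
    exact (hf.mk_C_mul_X_add_C_eq_zero_iff hf2 c d).mpr (h c d hx)

end Polynomial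

lemma IsFractionRing.exists_sq_eq_algebraMap_iff {R K : Type*} [CommRing R] [IsDomain R] [Field K]
    [Algebra R K] [IsFractionRing R K] (a : R) :
    (∃ q : K, q ^ 2 = algebraMap R K a) ↔ ∃ c d : R, d ≠ 0 ∧ c ^ 2 = a * d ^ 2 := by
  have hK : ∀ {d : R}, d ≠ 0 → algebraMap R K d ≠ 0 :=
    fun hd => (map_ne_zero_iff _ (IsFractionRing.injective R K)).mpr hd
  constructor
  · rintro ⟨q, hq⟩
    obtain ⟨c, d, hd, rfl⟩ := IsFractionRing.div_surjective (A := R) q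
    refine ⟨c, d, nonZeroDivisors.ne_zero hd, IsFractionRing.injective R K ?_⟩
    rw [div_pow, div_eq_iff (pow_ne_zero 2 (hK (nonZeroDivisors.ne_zero hd)))] at hq
    simpa only [map_pow, map_mul] using hq
  · rintro ⟨c, d, hd, hcd⟩
    refine ⟨algebraMap R K c / algebraMap R K d, ?_⟩
    rw [div_pow, div_eq_iff (pow_ne_zero 2 (hK hd)), ← map_pow, ← map_pow, ← map_mul, hcd]

/-- Let `R`, `S` be integral domains, `φ : R → S`, and `a ∈ R` with
`φ(a) = β²` for some `β ∈ S`.  The induced homomorphism `Ψ : R[X]/(X² - a) → S`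
(characterized by `Ψ ∘ (mk ∘ C) = φ` and `Ψ (mk X) = β`) is injective iff `φ` is
injective and `a` has no square root in `Frac(R)`. -/
theorem stmt_5 (R S : Type*) [CommRing R] [IsDomain R] [CommRing S] [IsDomain S]
    (φ : R →+* S) (a : R) (β : S) (hβ : φ a = β ^ 2)
    (Ψ : (R[X] ⧸ Ideal.span {(X : R[X]) ^ 2 - C a}) →+* S)
    (hΨC : ∀ r : R, Ψ (Ideal.Quotient.mk _ (C r)) = φ r)
    (hΨX : Ψ (Ideal.Quotient.mk _ (X : R[X])) = β) :
    Function.Injective Ψ ↔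
      Function.Injective φ ∧
        ¬∃ q : FractionRing R, q ^ 2 = algebraMap R (FractionRing R) a := by
  have hφ_ad2 : ∀ d : R, φ (a * d ^ 2) = (φ d * β) ^ 2 := fun d => by
    rw [map_mul, map_pow, hβ]; ring
  rw [(monic_X_pow_sub_C a two_ne_zero).injective_quotient_hom_iff (degree_X_pow_sub_C two_pos a)
    φ β Ψ hΨC hΨX, IsFractionRing.exists_sq_eq_algebraMap_iff]
  constructor
  · intro h
    refine ⟨(injective_iff_map_eq_zero φ).mpr fun r hr => (h r 0 (by simp [hr])).2, ?_⟩
    rintro ⟨c, d, hd, hcd⟩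
    have hroot : (φ d * β + φ c) * (φ d * β + φ (-c)) = 0 := by
      have h := congrArg φ hcd
      rw [map_pow, hφ_ad2] at h
      rw [map_neg]; linear_combination -h
    rcases mul_eq_zero.mp hroot with h0 | h0
    exacts [hd (h _ _ h0).1, hd (h _ _ h0).1]
  · rintro ⟨hφ, hsq⟩ c d hcd
    obtain rfl : d = 0 := by
      by_contra hd
      refine hsq ⟨c, d, hd, hφ ?_⟩
      rw [map_pow, hφ_ad2, eq_neg_of_add_eq_zero_right hcd, neg_sq]
    simp only [map_zero, zero_mul, zero_add] at hcd
    exact ⟨rfl, hφ (hcd.trans (map_zero φ).symm)⟩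
end

section
/- Let (R, 𝔪) be a Noetherian local domain admitting a canonical module ω_R which is an ideal of R, and let a ∈ 𝔪 have no square root in Frac(R). Then S := R ⊕ ω_R with multiplication (r,x)(r',x') = (rr' + xx'a, rx' + r'x) is an integral domain and a local ring with maximal ideal 𝔪 ⊕ ω_R. -/
open Polynomial IsLocalRing

/-!
Since `a` is not a square in `Frac(R)`, `X² - a` is irreducible over `Frac(R)`; being monic, it
is then prime in `R[X]`, so `R[X]/(X² - a)` and its subring `S` are domains. For locality,
`X ↦ 0` followed by reduction mod `𝔪` is a ring map `R[X]/(X² - a) → R/𝔪` (as `a ∈ 𝔪`), sending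
`r + xX` to `r mod 𝔪`. When `r ∉ 𝔪`, the norm `r² - x²a` is a unit of `R`, and
`(r - xX)/(r² - x²a)` is an inverse of `r + xX` lying in `S`. So the nonunits of `S` are exactly
the kernel of this map, an ideal.
-/

theorem Polynomial.Monic.prime_of_irreducible_map {R K : Type*} [CommRing R] [Field K]
    {f : R[X]} (hf : f.Monic) {i : R →+* K} (hi : Function.Injective i)
    (hirr : Irreducible (f.map i)) : Prime f := by
  have := i.domain_nontrivial
  refine ⟨hf.ne_zero, fun hu => hirr.not_isUnit (hu.map (mapRingHom i)), fun p q hpq => ?_⟩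
  have hdvd : f.map i ∣ p.map i * q.map i := by
    simpa only [Polynomial.map_mul] using Polynomial.map_dvd i hpq
  exact (hirr.prime.dvd_or_dvd hdvd).imp (map_dvd_map i hi hf).mp (map_dvd_map i hi hf).mp

theorem isDomain_quotient_span_X_sq_sub_C {R K : Type*} [CommRing R] [Field K]
    {i : R →+* K} (hi : Function.Injective i) {a : R} (ha : ∀ q : K, q ^ 2 ≠ i a) :
    IsDomain (R[X] ⧸ Ideal.span {(X : R[X]) ^ 2 - C a}) := by
  have := i.domain_nontrivial
  have hmonic : ((X : R[X]) ^ 2 - C a).Monic := monic_X_pow_sub_C a two_ne_zero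
  have hirr : Irreducible (((X : R[X]) ^ 2 - C a).map i) := by
    simpa [Polynomial.map_pow] using (X_pow_sub_C_irreducible_iff_of_prime Nat.prime_two).mpr ha
  have := (Ideal.span_singleton_prime hmonic.ne_zero).mpr (hmonic.prime_of_irreducible_map hi hirr)
  exact Ideal.Quotient.isDomain _

section LocalCriterion

variable {A K : Type*} [CommRing A] [CommRing K] [Nontrivial K] (f : A →+* K)

theorem mem_nonunits_iff_map_eq_zero (h : ∀ x, f x ≠ 0 → IsUnit x) (x : A) :
    x ∈ nonunits A ↔ f x = 0 :=
  ⟨fun hx => not_not.mp (mt (h x) hx), fun hx hu => (hu.map f).ne_zero hx⟩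

theorem IsLocalRing.of_isUnit_of_map_ne_zero (h : ∀ x, f x ≠ 0 → IsUnit x) : IsLocalRing A := by
  have := f.domain_nontrivial
  refine .of_nonunits_add fun x y hx hy => ?_
  rw [mem_nonunits_iff_map_eq_zero f h] at hx hy ⊢
  rw [map_add, hx, hy, add_zero]

theorem IsLocalRing.maximalIdeal_eq_ker_of_isUnit_of_map_ne_zero [IsLocalRing A]
    (h : ∀ x, f x ≠ 0 → IsUnit x) : maximalIdeal A = RingHom.ker f := by
  ext x
  rw [mem_maximalIdeal, mem_nonunits_iff_map_eq_zero f h, RingHom.mem_ker]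

end LocalCriterion

section QuadraticExtension

variable {R : Type*} [CommRing R] {a : R}

theorem mk_C_add_C_mul_X_mul_conj (r x w : R) :
    Ideal.Quotient.mk (Ideal.span {(X : R[X]) ^ 2 - C a}) (C r + C x * X) *
        Ideal.Quotient.mk _ (C (r * w) + C (-(x * w)) * X) =
      Ideal.Quotient.mk _ (C ((r ^ 2 - x ^ 2 * a) * w)) := by
  rw [← map_mul, Ideal.Quotient.eq, Ideal.mem_span_singleton]
  exact ⟨C (-(x ^ 2 * w)), by simp only [C_mul, C_sub, C_neg, C_pow]; ring⟩

variable [IsLocalRing R]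

noncomputable def evalZeroResidue (ham : a ∈ maximalIdeal R) :
    R[X] ⧸ Ideal.span {(X : R[X]) ^ 2 - C a} →+* ResidueField R :=
  Ideal.Quotient.lift _ (eval₂RingHom (residue R) 0) fun p hp => by
    obtain ⟨q, rfl⟩ := Ideal.mem_span_singleton'.mp hp
    simp [(residue_eq_zero_iff a).mpr ham]

theorem evalZeroResidue_mk (ham : a ∈ maximalIdeal R) (r x : R) :
    evalZeroResidue ham (Ideal.Quotient.mk _ (C r + C x * X)) = residue R r := by
  simp [evalZeroResidue]

theorem isUnit_of_residue_ne_zero (ham : a ∈ maximalIdeal R) {ω : Ideal R}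
    {S : Subring (R[X] ⧸ Ideal.span {(X : R[X]) ^ 2 - C a})}
    (hS : (S : Set (R[X] ⧸ Ideal.span {(X : R[X]) ^ 2 - C a})) =
      {y | ∃ r x', x' ∈ ω ∧ y = Ideal.Quotient.mk _ (C r + C x' * X)})
    {s : S} {r x : R} (hx : x ∈ ω)
    (hs : (s : R[X] ⧸ Ideal.span {(X : R[X]) ^ 2 - C a}) = Ideal.Quotient.mk _ (C r + C x * X))
    (hr : residue R r ≠ 0) : IsUnit s := by
  have hnorm : IsUnit (r ^ 2 - x ^ 2 * a) :=
    (residue_ne_zero_iff_isUnit _).mp (by simp [(residue_eq_zero_iff a).mpr ham, hr])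
  obtain ⟨w, hw⟩ := hnorm.exists_right_inv
  have hconj : Ideal.Quotient.mk _ (C (r * w) + C (-(x * w)) * X) ∈ S := by
    rw [← SetLike.mem_coe, hS]
    exact ⟨_, _, ω.neg_mem (ω.mul_mem_right w hx), rfl⟩
  refine IsUnit.of_mul_eq_one (a := s) ⟨_, hconj⟩ (Subtype.ext ?_)
  simp only [Subring.coe_mul, hs, mk_C_add_C_mul_X_mul_conj, hw, map_one, Subring.coe_one]

end QuadraticExtension

theorem stmt_13_general (R : Type*) [CommRing R] [IsDomain R] [IsLocalRing R]
    (ω : Ideal R)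
    (a : R) (ham : a ∈ maximalIdeal R)
    (ha : ¬∃ q : FractionRing R, q ^ 2 = algebraMap R (FractionRing R) a)
    (S : Subring (R[X] ⧸ Ideal.span {(X : R[X]) ^ 2 - C a}))
    (hS : (S : Set (R[X] ⧸ Ideal.span {(X : R[X]) ^ 2 - C a})) =
      {y | ∃ r x', x' ∈ ω ∧ y = Ideal.Quotient.mk _ (C r + C x' * X)}) :
    IsDomain S ∧
      ∃ _ : IsLocalRing S,
        ∀ s : S, s ∈ maximalIdeal S ↔
          ∃ r ∈ maximalIdeal R, ∃ x' ∈ ω,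
            (s : R[X] ⧸ Ideal.span {(X : R[X]) ^ 2 - C a}) =
              Ideal.Quotient.mk _ (C r + C x' * X) := by
  have := isDomain_quotient_span_X_sq_sub_C (IsFractionRing.injective R (FractionRing R))
    (not_exists.mp ha)
  have hform (s : S) : ∃ r x', x' ∈ ω ∧
      (s : R[X] ⧸ Ideal.span {(X : R[X]) ^ 2 - C a}) = Ideal.Quotient.mk _ (C r + C x' * X) := by
    have hs := s.2
    rwa [← SetLike.mem_coe, hS] at hs
  let π := (evalZeroResidue ham).comp S.subtype
  have hπ {s : S} {r x : R}
      (hs : (s : R[X] ⧸ Ideal.span {(X : R[X]) ^ 2 - C a}) = Ideal.Quotient.mk _ (C r + C x * X)) :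
      π s = residue R r := by
    rw [RingHom.comp_apply, Subring.subtype_apply, hs, evalZeroResidue_mk]
  have hunit (s : S) (hs : π s ≠ 0) : IsUnit s := by
    obtain ⟨r, x, hx, hsr⟩ := hform s
    exact isUnit_of_residue_ne_zero ham hS hx hsr (hπ hsr ▸ hs)
  have := IsLocalRing.of_isUnit_of_map_ne_zero π hunit
  refine ⟨inferInstance, inferInstance, fun s => ?_⟩
  rw [IsLocalRing.maximalIdeal_eq_ker_of_isUnit_of_map_ne_zero π hunit, RingHom.mem_ker]
  obtain ⟨r, x, hx, hsr⟩ := hform s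
  constructor
  · intro h
    exact ⟨r, (residue_eq_zero_iff r).mp (hπ hsr ▸ h), x, hx, hsr⟩
  · rintro ⟨r', hr', x', -, hs'⟩
    rw [hπ hs', residue_eq_zero_iff]
    exact hr'

/-- Let `(R, 𝔪)` be a Noetherian local domain with a canonical module
`ω_R` realized as a (nonzero) ideal `ω ⊆ R`, and let `a ∈ 𝔪` have no square root in
`Frac(R)`.  The ring `S = R ⊕ ω` with multiplication
`(r,x)(r',x') = (rr' + xx'a, rx' + r'x)`, realized as the subring
`{r + x·X : r ∈ R, x ∈ ω}` of `R[X]/(X² - a)`, is an integral domain and a local ring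
with maximal ideal `𝔪 ⊕ ω`. -/
theorem stmt_13 (R : Type*) [CommRing R] [IsDomain R] [IsNoetherianRing R] [IsLocalRing R]
    (ω : Ideal R) (hω : ω ≠ ⊥)
    (a : R) (ham : a ∈ maximalIdeal R)
    (ha : ¬∃ q : FractionRing R, q ^ 2 = algebraMap R (FractionRing R) a)
    (S : Subring (R[X] ⧸ Ideal.span {(X : R[X]) ^ 2 - C a}))
    (hS : (S : Set (R[X] ⧸ Ideal.span {(X : R[X]) ^ 2 - C a})) =
      {y | ∃ r x', x' ∈ ω ∧ y = Ideal.Quotient.mk _ (C r + C x' * X)}) :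
    IsDomain S ∧
      ∃ _ : IsLocalRing S,
        ∀ s : S, s ∈ maximalIdeal S ↔
          ∃ r ∈ maximalIdeal R, ∃ x' ∈ ω,
            (s : R[X] ⧸ Ideal.span {(X : R[X]) ^ 2 - C a}) =
              Ideal.Quotient.mk _ (C r + C x' * X) :=
  stmt_13_general R ω a ham ha S hS
end

section
/- Let S be a Noetherian domain and T a ring extension of S which is free of rank 2 as an S-module (e.g., T = S[Z]/(g − Z²)). Then T has at most two associated primes. -/
/-!
An associated prime of `T` consists of zero divisors of `T`; since `T` is free over the domain
`S`, it therefore misses the image of `S ∖ {0}`, so it is the contraction of a prime of the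
localization `K ⊗[S] T`, where `K = Frac S`. That localization is a `2`-dimensional algebra over
the field `K`, hence Artinian with at most `2` prime ideals.
-/

open TensorProduct

theorem Set.exists_range_subset_pair_of_natCard_le_two {α β : Type*} [Finite α] [Nonempty β]
    (f : α → β) (h : Nat.card α ≤ 2) : ∃ x y, Set.range f ⊆ {x, y} := by
  have hle : (Set.range f).ncard ≤ 2 := by
    rw [← Nat.card_coe_set_eq]
    exact (Finite.card_range_le f).trans h
  obtain h0 | h1 | h2 : (Set.range f).ncard = 0 ∨ (Set.range f).ncard = 1 ∨
      (Set.range f).ncard = 2 := by omega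
  · rw [Set.ncard_eq_zero] at h0
    exact ⟨Classical.arbitrary β, Classical.arbitrary β, by simp [h0]⟩
  · obtain ⟨x, hx⟩ := Set.ncard_eq_one.mp h1
    exact ⟨x, x, by simp [hx]⟩
  · obtain ⟨x, y, -, hxy⟩ := Set.ncard_eq_two.mp h2
    exact ⟨x, y, hxy.subset⟩

theorem IsAssociatedPrime.notMem_of_isSMulRegular {R M : Type*} [CommSemiring R]
    [AddCommMonoid M] [Module R M] {I : Ideal R} (h : IsAssociatedPrime I M) {r : R}
    (hr : IsSMulRegular M r) : r ∉ I := by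
  obtain ⟨x, rfl⟩ := h.2
  intro hrI
  obtain ⟨n, hn⟩ := Ideal.mem_radical_iff.mp hrI
  obtain rfl : x = 0 := hr.pow n (by simpa using hn)
  exact h.isPrime.ne_top (by simp)

theorem associatedPrimes_subset_range_comap_of_isLocalization {R B N : Type*} [CommRing R]
    [CommRing B] [Algebra R B] (M : Submonoid R) [IsLocalization M B] [AddCommMonoid N]
    [Module R N] (hM : ∀ r ∈ M, IsSMulRegular N r) :
    associatedPrimes R N ⊆ Set.range fun P : PrimeSpectrum B ↦ P.asIdeal.comap (algebraMap R B) := by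
  intro p hp
  have hdisj : Disjoint (M : Set R) p := Set.disjoint_left.mpr fun r hrM ↦
    hp.notMem_of_isSMulRegular (hM r hrM)
  obtain ⟨P, hP⟩ : (⟨p, hp.isPrime⟩ : PrimeSpectrum R) ∈ Set.range (PrimeSpectrum.comap
      (algebraMap R B)) := by
    rw [PrimeSpectrum.localization_comap_range B M]
    exact hdisj
  exact ⟨P, congrArg PrimeSpectrum.asIdeal hP⟩

theorem card_primeSpectrum_le_finrank (F A : Type*) [Field F] [CommRing A] [Algebra F A]
    [Module.Finite F A] : Nat.card (PrimeSpectrum A) ≤ Module.finrank F A := by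
  have : IsArtinianRing A := .of_finite F A
  have := Fintype.ofFinite (PrimeSpectrum A)
  rw [IsArtinianRing.finrank_eq_sum_primeSpectrum A F, Nat.card_eq_fintype_card,
    Fintype.card_eq_sum_ones]
  refine Finset.sum_le_sum fun p _ ↦ ?_
  have : Module.Finite F (Localization.AtPrime p.asIdeal) :=
    .of_surjective (Algebra.linearMap A _ |>.restrictScalars F)
      (IsArtinianRing.localization_surjective p.asIdeal.primeCompl _)
  exact Module.finrank_pos

attribute [local instance] Algebra.TensorProduct.rightAlgebra

theorem stmt_19_general (S T : Type*) [CommRing S] [IsDomain S]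
    [CommRing T] [Algebra S T]
    [Module.Free S T] (hrank : Module.finrank S T = 2) :
    ∃ p q : Ideal T, associatedPrimes T T ⊆ {p, q} := by
  let K := FractionRing S
  have : Module.Finite S T := Module.finite_of_finrank_pos (by omega)
  have hregular : ∀ t ∈ Algebra.algebraMapSubmonoid T (nonZeroDivisors S), IsSMulRegular T t := by
    rintro _ ⟨s, hs, rfl⟩
    exact (isSMulRegular_algebraMap_iff T).mpr
      ((isRegular_iff_mem_nonZeroDivisors.mpr hs).isSMulRegular)
  have : IsArtinianRing (K ⊗[S] T) := .of_finite K _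
  have hcard : Nat.card (PrimeSpectrum (K ⊗[S] T)) ≤ 2 :=
    (card_primeSpectrum_le_finrank K _).trans_eq (by rw [Module.finrank_baseChange, hrank])
  obtain ⟨p, q, hpq⟩ := Set.exists_range_subset_pair_of_natCard_le_two
    (fun P : PrimeSpectrum (K ⊗[S] T) ↦ P.asIdeal.comap (algebraMap T _)) hcard
  exact ⟨p, q, (associatedPrimes_subset_range_comap_of_isLocalization _ hregular).trans hpq⟩

/-- Let `S` be a Noetherian domain and `T` a ring extension of `S`
that is free of rank `2` as an `S`-module.  Then `T` has at most two associated
primes. -/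
theorem stmt_19 (S T : Type*) [CommRing S] [IsDomain S] [IsNoetherianRing S]
    [CommRing T] [Algebra S T] (hinj : Function.Injective (algebraMap S T))
    [Module.Free S T] (hrank : Module.finrank S T = 2) :
    ∃ p q : Ideal T, associatedPrimes T T ⊆ {p, q} :=
  stmt_19_general S T hrank
end
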